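/- Suppose that to each node s of the complete m-ary tree of depth D is assigned a positive real number P_e(s) > 0. Define weighted probabilities recursively: P_w(s) = P_e(s) if s is at depth D, and P_w(s) = β P_e(s) + (1-β) ∏_{j=0}^{m-1} P_w(sj) otherwise, where β ∈ (0,1). Then for every node s at depth d (0 ≤ d ≤ D), P_w(s) = ∑_{U ∈ 𝒯(D-d)} π_{D-d}(U) ∏_{u ∈ leaves(U)} P_e(su), where π is the prior π_k(U) = α^{|U|-1} β^{|U|-L_k(U)} with α = (1-β)^{1/(m-1)}, and su denotes concatenation of the path s with the path u. -/
import Mathlib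


inductive PTree (m : ℕ) : Type
  | leaf : PTree m
  | node (c : Fin m → PTree m) : PTree m

namespace PTree

def depth {m : ℕ} : PTree m → ℕ
  | leaf => 0
  | node c => (Finset.univ.sup fun j => depth (c j)) + 1

def numLeaves {m : ℕ} : PTree m → ℕ
  | leaf => 1
  | node c => ∑ j, numLeaves (c j)

def leavesAt {m : ℕ} : ℕ → PTree m → ℕ
  | 0, leaf => 1
  | 0, node _ => 0
  | _ + 1, leaf => 0
  | d + 1, node c => ∑ j, leavesAt d (c j)

noncomputable def prior {m : ℕ} (α β : ℝ) (D : ℕ) (T : PTree m) : ℝ :=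
  α ^ (numLeaves T - 1) * β ^ (numLeaves T - leavesAt D T)

def leafList {m : ℕ} : PTree m → List (List (Fin m))
  | leaf => [[]]
  | node c => (List.finRange m).flatMap fun j => (leafList (c j)).map fun u => j :: u

lemma one_le_numLeaves {m : ℕ} (hm : 1 ≤ m) (T : PTree m) : 1 ≤ numLeaves T := by
  induction T with
  | leaf => simp [numLeaves]
  | node c ih =>
    have h0 : (⟨0, hm⟩ : Fin m) ∈ Finset.univ := Finset.mem_univ _
    calc 1 ≤ numLeaves (c ⟨0, hm⟩) := ih _
    _ ≤ ∑ j, numLeaves (c j) :=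
      Finset.single_le_sum (f := fun j => numLeaves (c j)) (fun i _ => Nat.zero_le _) h0

lemma leavesAt_le {m : ℕ} (T : PTree m) : ∀ d, leavesAt d T ≤ numLeaves T := by
  induction T with
  | leaf => intro d; cases d <;> simp [leavesAt, numLeaves]
  | node c ih =>
    intro d; cases d with
    | zero => simp [leavesAt]
    | succ d => exact Finset.sum_le_sum fun j _ => ih j d

def zeroEquiv (m : ℕ) : Unit ≃ {U : PTree m // U.depth ≤ 0} where
  toFun := fun _ => ⟨.leaf, le_refl 0⟩
  invFun := fun _ => ()
  left_inv := fun _ => rfl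
  right_inv := fun U => by
    rcases U with ⟨(_ | c), h⟩
    · rfl
    · exact absurd h (by simp [depth])

def treeEquiv (m k : ℕ) :
    {U : PTree m // U.depth ≤ k + 1} ≃ Option (Fin m → {U : PTree m // U.depth ≤ k}) where
  toFun U := match U with
    | ⟨.leaf, _⟩ => none
    | ⟨.node c, h⟩ => some fun j => ⟨c j, by
        simp only [depth, Nat.add_le_add_iff_right] at h
        exact le_trans (Finset.le_sup (f := fun j => depth (c j)) (Finset.mem_univ j)) h⟩
  invFun o := match o with
    | none => ⟨.leaf, Nat.zero_le _⟩
    | some f => ⟨.node fun j => (f j).1, by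
        simp only [depth, Nat.add_le_add_iff_right]
        exact Finset.sup_le fun j _ => (f j).2⟩
  left_inv U := by rcases U with ⟨(_ | c), h⟩ <;> rfl
  right_inv o := by rcases o with _ | f <;> rfl

def fintypeAux (m : ℕ) : ∀ k, Fintype {U : PTree m // U.depth ≤ k}
  | 0 => Fintype.ofEquiv Unit (zeroEquiv m)
  | k + 1 => letI := fintypeAux m k; Fintype.ofEquiv _ (treeEquiv m k).symm

instance {m k : ℕ} : Fintype {U : PTree m // U.depth ≤ k} := fintypeAux m k

lemma prior_node {m : ℕ} (hm : 2 ≤ m) {α β : ℝ} (hαm : α ^ (m - 1) = 1 - β)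
    (k : ℕ) (c : Fin m → PTree m) :
    prior α β (k + 1) (node c) = (1 - β) * ∏ j, prior α β k (c j) := by
  have h1 : ∀ j : Fin m, 1 ≤ numLeaves (c j) := fun j => one_le_numLeaves (by omega) _
  have hN : m ≤ ∑ j, numLeaves (c j) := by
    calc m = ∑ _j : Fin m, 1 := by simp
    _ ≤ _ := Finset.sum_le_sum fun j _ => h1 j
  unfold prior
  rw [Finset.prod_mul_distrib, Finset.prod_pow_eq_pow_sum, Finset.prod_pow_eq_pow_sum,
    Finset.sum_tsub_distrib _ (fun j _ => h1 j),
    Finset.sum_tsub_distrib _ (fun j _ => leavesAt_le (c j) k)]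
  have hnum : numLeaves (node c) = ∑ j, numLeaves (c j) := rfl
  have hlv : leavesAt (k + 1) (node c) = ∑ j, leavesAt k (c j) := rfl
  rw [hnum, hlv]
  simp only [Finset.sum_const, Finset.card_univ, Fintype.card_fin, smul_eq_mul, mul_one]
  rw [← hαm, ← mul_assoc, ← pow_add]
  congr 2
  omega

lemma leafList_node_prod {m : ℕ} (Pe : List (Fin m) → ℝ) (s : List (Fin m))
    (c : Fin m → PTree m) :
    ((leafList (node c)).map fun u => Pe (s ++ u)).prod
      = ∏ j, ((leafList (c j)).map fun u => Pe ((s ++ [j]) ++ u)).prod := by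
  rw [leafList, List.map_flatMap, List.flatMap, List.prod_flatten, List.map_map,
    Fin.prod_univ_def]
  congr 1
  apply List.map_congr_left
  intro j _
  simp only [Function.comp, List.map_map]
  congr 1
  apply List.map_congr_left
  intro u _
  simp

end PTree

/-- Weighted probabilities of the CCTW recursion; first argument is the remaining depth. -/
noncomputable def Pw {m : ℕ} (β : ℝ) (Pe : List (Fin m) → ℝ) : ℕ → List (Fin m) → ℝ
  | 0, s => Pe s
  | d + 1, s => β * Pe s + (1 - β) * ∏ j, Pw β Pe d (s ++ [j])

open PTree in
lemma cctw_key {m : ℕ} (hm : 2 ≤ m) {α β : ℝ} (hαm : α ^ (m - 1) = 1 - β)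
    (Pe : List (Fin m) → ℝ) :
    ∀ (k : ℕ) (s : List (Fin m)),
      Pw β Pe k s = ∑ U : {U : PTree m // U.depth ≤ k},
        prior α β k U.1 * ((leafList U.1).map fun u => Pe (s ++ u)).prod := by
  intro k
  induction k with
  | zero =>
    intro s
    rw [← Equiv.sum_comp (zeroEquiv m)]
    simp [Pw, zeroEquiv, prior, numLeaves, leavesAt, leafList]
  | succ k ih =>
    intro s
    have hrec : Pw β Pe (k + 1) s
        = β * Pe s + (1 - β) * ∏ j, Pw β Pe k (s ++ [j]) := rfl
    rw [hrec]
    rw [← Equiv.sum_comp (treeEquiv m k).symm, Fintype.sum_option]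
    have hnone : (treeEquiv m k).symm none = ⟨.leaf, Nat.zero_le _⟩ := rfl
    have hsome : ∀ f, (treeEquiv m k).symm (some f)
        = ⟨.node fun j => (f j).1, ((treeEquiv m k).symm (some f)).2⟩ := fun f => rfl
    rw [hnone]
    have hleaf : prior α β (k + 1) (.leaf : PTree m)
        * ((leafList (.leaf : PTree m)).map fun u => Pe (s ++ u)).prod = β * Pe s := by
      simp [prior, numLeaves, leavesAt, leafList]
    rw [hleaf]
    congr 1
    -- node part
    have hterm : ∀ f : Fin m → {U : PTree m // U.depth ≤ k},
        prior α β (k + 1) ((treeEquiv m k).symm (some f)).1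
          * ((leafList ((treeEquiv m k).symm (some f)).1).map fun u => Pe (s ++ u)).prod
        = (1 - β) * ∏ j, (prior α β k (f j).1
            * ((leafList (f j).1).map fun u => Pe ((s ++ [j]) ++ u)).prod) := by
      intro f
      have h1 : ((treeEquiv m k).symm (some f)).1 = .node fun j => (f j).1 := rfl
      rw [h1, prior_node hm hαm, leafList_node_prod, Finset.prod_mul_distrib]
      ring
    rw [Finset.sum_congr rfl fun f _ => hterm f]
    rw [← Finset.mul_sum]
    congr 1
    rw [Finset.prod_congr rfl fun j _ => ih (s ++ [j])]
    rw [Finset.prod_univ_sum, Fintype.piFinset_univ]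

/-- the CCTW weighted probability at a node `s` at depth `d` equals the
prior-weighted sum over trees of depth at most `D - d` of products of estimated
probabilities at the leaves. -/
theorem cctw_weighted_probability {m : ℕ} (hm : 2 ≤ m) {α β : ℝ}
    (hβ : β ∈ Set.Ioo (0 : ℝ) 1)
    (hα : α = (1 - β) ^ ((1 : ℝ) / ((m : ℝ) - 1)))
    (D : ℕ) (Pe : List (Fin m) → ℝ) (hPe : ∀ s, 0 < Pe s)
    (d : ℕ) (hd : d ≤ D) (s : List (Fin m)) (hs : s.length = d) :
    Pw β Pe (D - d) s
      = ∑' U : {U : PTree m // U.depth ≤ D - d},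
          PTree.prior α β (D - d) U.1
            * ((PTree.leafList U.1).map fun u => Pe (s ++ u)).prod := by
  have h1β : (0:ℝ) < 1 - β := by linarith [hβ.2]
  have hm1 : ((m:ℝ) - 1) ≠ 0 := by
    have : (2:ℝ) ≤ m := by exact_mod_cast hm
    linarith
  have hαm : α ^ (m - 1) = 1 - β := by
    rw [hα, ← Real.rpow_natCast ((1 - β) ^ ((1:ℝ)/((m:ℝ)-1))) (m - 1),
      ← Real.rpow_mul h1β.le]
    have hcast : ((m - 1 : ℕ) : ℝ) = (m:ℝ) - 1 := by
      push_cast [Nat.cast_sub (by omega : 1 ≤ m)]; ring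
    rw [hcast, one_div, inv_mul_cancel₀ hm1, Real.rpow_one]
  rw [tsum_fintype]
  exact cctw_key hm hαm Pe (D - d) s
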